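/- arXiv:2510.08563 — 2 statements merged into one kernel-verified Lean document; each statement's English description precedes it below -/
import Mathlib

section
/- Let A ∈ ℝ^{m×n} have all rows nonzero, let b ∈ range(A) (so Ax = b is consistent), and let {x_k} be the RK iterates for the system Ax = b with initial point x_0 ∈ range(Aᵀ). Let x_LS = A†b and let σ_j > 0 be a nonzero singular value of A with associated right singular vector v_j (a unit vector with AᵀA v_j = σ_j² v_j). Then for every k ≥ 0: 𝔼⟨x_k − x_LS, v_j⟩ = (1 − σ_j²/‖A‖_F²)^k ⟨x_0 − x_LS, v_j⟩. No full-rank assumption on A is required. -/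
open Matrix

noncomputable section

namespace RK

/-- The Euclidean inner product on `Fin n → ℝ`. -/
def dot {n : ℕ} (v w : Fin n → ℝ) : ℝ := ∑ i, v i * w i

/-- The squared Euclidean norm on `Fin n → ℝ`. -/
def normSq {n : ℕ} (v : Fin n → ℝ) : ℝ := ∑ i, v i ^ 2

/-- The Euclidean norm on `Fin n → ℝ`. -/
def euclNorm {n : ℕ} (v : Fin n → ℝ) : ℝ := Real.sqrt (normSq v)

/-- The squared Frobenius norm of a matrix. -/
def frobSq {m n : ℕ} (A : Matrix (Fin m) (Fin n) ℝ) : ℝ := ∑ i, ∑ j, A i j ^ 2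

/-- One step of the (randomized) Kaczmarz method for the system `A x ≈ b`, using row `i`:
`x ↦ x - ((aᵢᵀ x - bᵢ) / ‖aᵢ‖²) aᵢ`. -/
def rkStep {m n : ℕ} (A : Matrix (Fin m) (Fin n) ℝ) (b : Fin m → ℝ) (i : Fin m)
    (x : Fin n → ℝ) : Fin n → ℝ :=
  x - ((dot (A i) x - b i) / normSq (A i)) • A i

/-- `rkExp A b x0 k f` is the expectation `𝔼 f(x_k)` of `f` evaluated at the `k`-th iterate of the
randomized Kaczmarz algorithm applied to `A x ≈ b` started at `x0`, where at each step the row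
index `i` is drawn independently at random with probability `‖aᵢ‖² / ‖A‖_F²`. -/
def rkExp {m n : ℕ} (A : Matrix (Fin m) (Fin n) ℝ) (b : Fin m → ℝ) (x0 : Fin n → ℝ) :
    ℕ → ((Fin n → ℝ) → ℝ) → ℝ
  | 0, f => f x0
  | k + 1, f => rkExp A b x0 k fun x => ∑ i, normSq (A i) / frobSq A * f (rkStep A b i x)

/-- The four Penrose conditions: `B` is the Moore–Penrose pseudoinverse of `A`. -/
def IsMoorePenrose {m n : ℕ} (A : Matrix (Fin m) (Fin n) ℝ)
    (B : Matrix (Fin n) (Fin m) ℝ) : Prop :=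
  A * B * A = A ∧ B * A * B = B ∧ (A * B)ᵀ = A * B ∧ (B * A)ᵀ = B * A

/-- The row space `range(Aᵀ)` of a matrix `A`. -/
def rowSpace {m n : ℕ} (A : Matrix (Fin m) (Fin n) ℝ) : Set (Fin n → ℝ) :=
  {v | ∃ u : Fin m → ℝ, v = Aᵀ.mulVec u}

/-- The null space (kernel) of a matrix `A`. -/
def nullSpace {m n : ℕ} (A : Matrix (Fin m) (Fin n) ℝ) : Set (Fin n → ℝ) :=
  {v | A.mulVec v = 0}

/-- `σ` is the smallest nonzero singular value of `A`: `σ > 0`, `σ²` is an eigenvalue of `AᵀA`,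
and `σ²` is less than or equal to every nonzero eigenvalue of `AᵀA`. -/
def IsSmallestNonzeroSingularValue {m n : ℕ} (A : Matrix (Fin m) (Fin n) ℝ) (σ : ℝ) : Prop :=
  0 < σ ∧ (∃ v : Fin n → ℝ, v ≠ 0 ∧ (Aᵀ * A).mulVec v = σ ^ 2 • v) ∧
    ∀ μ : ℝ, μ ≠ 0 → (∃ v : Fin n → ℝ, v ≠ 0 ∧ (Aᵀ * A).mulVec v = μ • v) → σ ^ 2 ≤ μ

lemma dot_sub_right {n : ℕ} (a x y : Fin n → ℝ) :
    dot a (x - y) = dot a x - dot a y := by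
  simp [dot, mul_sub, Finset.sum_sub_distrib]

lemma dot_sub_left {n : ℕ} (x y a : Fin n → ℝ) :
    dot (x - y) a = dot x a - dot y a := by
  simp [dot, sub_mul, Finset.sum_sub_distrib]

lemma dot_smul_left {n : ℕ} (c : ℝ) (x a : Fin n → ℝ) :
    dot (c • x) a = c * dot x a := by
  simp [dot, Finset.mul_sum, mul_assoc]

lemma normSq_ne_zero {n : ℕ} {v : Fin n → ℝ} (hv : v ≠ 0) : normSq v ≠ 0 := by
  intro h
  apply hv
  funext i
  have hnn : ∀ j ∈ Finset.univ, (0:ℝ) ≤ v j ^ 2 := fun j _ => sq_nonneg _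
  have := (Finset.sum_eq_zero_iff_of_nonneg hnn).mp h i (Finset.mem_univ i)
  have := sq_eq_zero_iff.mp this
  simpa using this

lemma sum_dot_dot {m n : ℕ} (A : Matrix (Fin m) (Fin n) ℝ) (u w : Fin n → ℝ) :
    ∑ i, dot (A i) u * dot (A i) w = dot u ((Aᵀ * A).mulVec w) := by
  show (A *ᵥ u) ⬝ᵥ (A *ᵥ w) = u ⬝ᵥ ((Aᵀ * A) *ᵥ w)
  rw [← Matrix.mulVec_mulVec, Matrix.dotProduct_mulVec u, Matrix.vecMul_transpose]

lemma rkExp_mul {m n : ℕ} (A : Matrix (Fin m) (Fin n) ℝ) (b : Fin m → ℝ) (x0 : Fin n → ℝ)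
    (c : ℝ) : ∀ (k : ℕ) (f : (Fin n → ℝ) → ℝ),
    rkExp A b x0 k (fun x => c * f x) = c * rkExp A b x0 k f
  | 0, f => rfl
  | k + 1, f => by
    show rkExp A b x0 k (fun x => ∑ i, normSq (A i) / frobSq A * (c * f (rkStep A b i x))) =
      c * rkExp A b x0 k (fun x => ∑ i, normSq (A i) / frobSq A * f (rkStep A b i x))
    rw [show (fun x => ∑ i, normSq (A i) / frobSq A * (c * f (rkStep A b i x))) =
        fun x => c * ∑ i, normSq (A i) / frobSq A * f (rkStep A b i x) from
      funext fun x => by rw [Finset.mul_sum]; exact Finset.sum_congr rfl fun i _ => by ring]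
    exact rkExp_mul A b x0 c k _

lemma frobSq_eq_sum_normSq {m n : ℕ} (A : Matrix (Fin m) (Fin n) ℝ) :
    frobSq A = ∑ i, normSq (A i) := rfl

lemma step_sum {m n : ℕ} (A : Matrix (Fin m) (Fin n) ℝ) (b : Fin m → ℝ)
    (hrows : ∀ i, A i ≠ 0) (hF : frobSq A ≠ 0)
    (xLS : Fin n → ℝ) (hb : ∀ i, b i = dot (A i) xLS)
    (σj : ℝ) (v : Fin n → ℝ) (hev : (Aᵀ * A).mulVec v = σj ^ 2 • v)
    (x : Fin n → ℝ) :
    ∑ i, normSq (A i) / frobSq A * dot (rkStep A b i x - xLS) v =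
      (1 - σj ^ 2 / frobSq A) * dot (x - xLS) v := by
  have key : ∀ i, dot (rkStep A b i x - xLS) v =
      dot (x - xLS) v - dot (A i) (x - xLS) / normSq (A i) * dot (A i) v := by
    intro i
    have : rkStep A b i x - xLS = (x - xLS) - ((dot (A i) x - b i) / normSq (A i)) • A i := by
      unfold rkStep; abel
    rw [this, dot_sub_left, dot_smul_left, hb i, ← dot_sub_right]
  have hsum : ∑ i, dot (A i) (x - xLS) * dot (A i) v = σj ^ 2 * dot (x - xLS) v := by
    rw [sum_dot_dot, hev]
    simp [dot, Finset.mul_sum, Pi.smul_apply, smul_eq_mul]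
    exact Finset.sum_congr rfl fun i _ => by ring
  calc ∑ i, normSq (A i) / frobSq A * dot (rkStep A b i x - xLS) v
      = ∑ i, (normSq (A i) / frobSq A * dot (x - xLS) v -
          (1 / frobSq A) * (dot (A i) (x - xLS) * dot (A i) v)) := by
        apply Finset.sum_congr rfl
        intro i _
        rw [key i]
        have hni : normSq (A i) ≠ 0 := normSq_ne_zero (hrows i)
        field_simp
    _ = (∑ i, normSq (A i)) / frobSq A * dot (x - xLS) v -
          (1 / frobSq A) * (σj ^ 2 * dot (x - xLS) v) := by
        rw [Finset.sum_sub_distrib, ← Finset.mul_sum, hsum, ← Finset.sum_mul, Finset.sum_div]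
    _ = (1 - σj ^ 2 / frobSq A) * dot (x - xLS) v := by
        rw [← frobSq_eq_sum_normSq, div_self hF]
        ring

/-- **Corollary 3.3 (Steinerberger's theorem without full rank).** For a consistent system
`Ax = b` with `x₀ ∈ range(Aᵀ)`, `x_LS = A†b`, and any nonzero singular value `σⱼ > 0` with right
singular vector `vⱼ`: `𝔼⟨x_k − x_LS, vⱼ⟩ = (1 − σⱼ²/‖A‖_F²)^k ⟨x₀ − x_LS, vⱼ⟩`. -/
theorem rk_singular_vector_consistent_lowrank {m n : ℕ}
    (A : Matrix (Fin m) (Fin n) ℝ) (b : Fin m → ℝ)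
    (hA : A ≠ 0) (hrows : ∀ i, A i ≠ 0)
    (hcons : ∃ x, A.mulVec x = b)
    (x0 : Fin n → ℝ) (hx0 : x0 ∈ rowSpace A)
    (Ap : Matrix (Fin n) (Fin m) ℝ) (hAp : IsMoorePenrose A Ap)
    (σj : ℝ) (hσj : 0 < σj) (v : Fin n → ℝ) (hv : normSq v = 1)
    (hev : (Aᵀ * A).mulVec v = σj ^ 2 • v)
    (k : ℕ) :
    rkExp A b x0 k (fun x => dot (x - Ap.mulVec b) v) =
      (1 - σj ^ 2 / frobSq A) ^ k * dot (x0 - Ap.mulVec b) v := by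
  -- Frobenius norm is nonzero
  have hF : frobSq A ≠ 0 := by
    intro h
    apply hA
    have hnn : ∀ i ∈ Finset.univ, (0:ℝ) ≤ ∑ j, A i j ^ 2 := fun i _ =>
      Finset.sum_nonneg fun j _ => sq_nonneg _
    ext i j
    have hi := (Finset.sum_eq_zero_iff_of_nonneg hnn).mp h i (Finset.mem_univ i)
    have hnn2 : ∀ j ∈ Finset.univ, (0:ℝ) ≤ A i j ^ 2 := fun j _ => sq_nonneg _
    have := (Finset.sum_eq_zero_iff_of_nonneg hnn2).mp hi j (Finset.mem_univ j)
    simpa using sq_eq_zero_iff.mp this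
  -- b i = ⟨aᵢ, x_LS⟩
  set xLS := Ap.mulVec b with hxLS
  have hb : ∀ i, b i = dot (A i) xLS := by
    obtain ⟨y, hy⟩ := hcons
    have : A.mulVec xLS = b := by
      rw [hxLS, ← hy, Matrix.mulVec_mulVec, Matrix.mulVec_mulVec, hAp.1]
    intro i
    rw [← this]
    simp [Matrix.mulVec, dotProduct, dot]
  induction k with
  | zero => simp [rkExp]
  | succ k ih =>
    show rkExp A b x0 k
        (fun x => ∑ i, normSq (A i) / frobSq A * dot (rkStep A b i x - xLS) v) = _
    rw [show (fun x => ∑ i, normSq (A i) / frobSq A * dot (rkStep A b i x - xLS) v) =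
        fun x => (1 - σj ^ 2 / frobSq A) * dot (x - xLS) v from
      funext fun x => step_sum A b hrows hF xLS hb σj v hev x]
    rw [rkExp_mul, ih]
    ring

end RK
end
end

section
/- Fix Ã ∈ ℝ^{m×n} and b̃ ∈ ℝᵐ, and let x̃_LS = Ã†b̃. Consider the minimization of ‖E x_LS − ε‖ over all pairs (A, b) ∈ ℝ^{m×n} × ℝᵐ with b ∈ range(A) (i.e., Ax = b consistent), where E = Ã − A, ε = b̃ − b, and x_LS = A†b. Then the minimum is attained, and its value equals ‖Ã x̃_LS − b̃‖; in particular, for every consistent pair (A, b), ‖(Ã − A)A†b − (b̃ − b)‖ ≥ ‖Ã Ã†b̃ − b̃‖. -/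
open Matrix

noncomputable section

namespace RK

lemma dot_eq_dotProduct {n : ℕ} (v w : Fin n → ℝ) : dot v w = v ⬝ᵥ w := by
  simp [dot, dotProduct]

lemma normSq_nonneg {n : ℕ} (v : Fin n → ℝ) : 0 ≤ normSq v :=
  Finset.sum_nonneg fun i _ => sq_nonneg _

lemma normSq_add {n : ℕ} (u v : Fin n → ℝ) :
    normSq (u + v) = normSq u + 2 * dot u v + normSq v := by
  simp only [normSq, dot, Pi.add_apply]
  rw [Finset.mul_sum, ← Finset.sum_add_distrib, ← Finset.sum_add_distrib]
  apply Finset.sum_congr rfl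
  intro i _
  ring

lemma dot_mulVec_left {m n : ℕ} (A : Matrix (Fin m) (Fin n) ℝ) (u : Fin n → ℝ)
    (w : Fin m → ℝ) : dot (A.mulVec u) w = dot u (Aᵀ.mulVec w) := by
  simp only [dot, Matrix.mulVec, dotProduct, Matrix.transpose_apply,
    Finset.sum_mul, Finset.mul_sum]
  rw [Finset.sum_comm]
  exact Finset.sum_congr rfl fun j _ => Finset.sum_congr rfl fun i _ => by ring

lemma euclNorm_mono {n : ℕ} {u v : Fin n → ℝ} (h : normSq u ≤ normSq v) :
    euclNorm u ≤ euclNorm v := Real.sqrt_le_sqrt h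

lemma key_orth {m n : ℕ} (At : Matrix (Fin m) (Fin n) ℝ) (bt : Fin m → ℝ)
    (Atp : Matrix (Fin n) (Fin m) ℝ) (hAtp : IsMoorePenrose At Atp) :
    Atᵀ.mulVec (At.mulVec (Atp.mulVec bt) - bt) = 0 := by
  obtain ⟨h1, h2, h3, h4⟩ := hAtp
  have key : Atᵀ * At * Atp = Atᵀ := by
    calc Atᵀ * At * Atp = Atᵀ * (At * Atp)ᵀ := by rw [h3, Matrix.mul_assoc]
    _ = (At * Atp * At)ᵀ := by simp [Matrix.transpose_mul, Matrix.mul_assoc]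
    _ = Atᵀ := by rw [h1]
  rw [Matrix.mulVec_sub, Matrix.mulVec_mulVec, Matrix.mulVec_mulVec, key, sub_self]

/-- Least-squares optimality of the pseudoinverse solution. -/
lemma ls_opt {m n : ℕ} (At : Matrix (Fin m) (Fin n) ℝ) (bt : Fin m → ℝ)
    (Atp : Matrix (Fin n) (Fin m) ℝ) (hAtp : IsMoorePenrose At Atp) (x : Fin n → ℝ) :
    euclNorm (At.mulVec (Atp.mulVec bt) - bt) ≤ euclNorm (At.mulVec x - bt) := by
  set p := At.mulVec (Atp.mulVec bt) with hp
  have hdecomp : At.mulVec x - bt = At.mulVec (x - Atp.mulVec bt) + (p - bt) := by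
    rw [Matrix.mulVec_sub]
    abel
  apply euclNorm_mono
  rw [hdecomp, normSq_add]
  have hcross : dot (At.mulVec (x - Atp.mulVec bt)) (p - bt) = 0 := by
    rw [dot_mulVec_left, show Atᵀ.mulVec (p - bt) = 0 from key_orth At bt Atp hAtp]
    simp [dot]
  rw [hcross]
  have := normSq_nonneg (At.mulVec (x - Atp.mulVec bt))
  linarith

/-- **Theorem 4.1, optimal value.** The minimum of `‖E x_LS − ε‖` over all consistent pairs
`(A, b)` (with `E = Ã − A`, `ε = b̃ − b`, `x_LS = A†b`) is attained and equals
`‖Ã x̃_LS − b̃‖` where `x̃_LS = Ã†b̃`; in particular every consistent pair gives a value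
at least `‖Ã Ã†b̃ − b̃‖`. -/
theorem smallest_horizon_value {m n : ℕ}
    (At : Matrix (Fin m) (Fin n) ℝ) (bt : Fin m → ℝ)
    (Atp : Matrix (Fin n) (Fin m) ℝ) (hAtp : IsMoorePenrose At Atp) :
    (∃ (A : Matrix (Fin m) (Fin n) ℝ) (b : Fin m → ℝ) (Ap : Matrix (Fin n) (Fin m) ℝ),
        IsMoorePenrose A Ap ∧ (∃ x, A.mulVec x = b) ∧
        euclNorm ((At - A).mulVec (Ap.mulVec b) - (bt - b)) =
          euclNorm (At.mulVec (Atp.mulVec bt) - bt)) ∧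
    (∀ (A : Matrix (Fin m) (Fin n) ℝ) (b : Fin m → ℝ) (Ap : Matrix (Fin n) (Fin m) ℝ),
        IsMoorePenrose A Ap → (∃ x, A.mulVec x = b) →
        euclNorm (At.mulVec (Atp.mulVec bt) - bt) ≤
          euclNorm ((At - A).mulVec (Ap.mulVec b) - (bt - b))) := by
  constructor
  · refine ⟨At, At.mulVec (Atp.mulVec bt), Atp, hAtp, ⟨Atp.mulVec bt, rfl⟩, ?_⟩
    congr 1
    rw [sub_self, Matrix.zero_mulVec]
    abel
  · intro A b Ap hAp ⟨x0, hx0⟩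
    have hb : A.mulVec (Ap.mulVec b) = b := by
      rw [← hx0, Matrix.mulVec_mulVec, Matrix.mulVec_mulVec, hAp.1]
    have hrw : (At - A).mulVec (Ap.mulVec b) - (bt - b) = At.mulVec (Ap.mulVec b) - bt := by
      rw [Matrix.sub_mulVec, hb]
      abel
    rw [hrw]
    exact ls_opt At bt Atp hAtp (Ap.mulVec b)

end RK
end
end
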